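/- Let θ ∈ (0, π/2) and x > 0. For z > 1 define D(x,z) := (1/(2θ)) · ( ∫_{α=−arctan x}^{θ} ((x·z + cos α)/(z + sin α) − x) dα + ∫_{α=arctan x}^{θ} ((x·z − cos α)/(z + sin α) − x) dα ). Then lim_{z→∞} (z/x) · D(x,z) = cos θ / θ. -/

import Mathlib

open Real Filter Set intervalIntegral Topology

/-!
Since `(x z ± cos α) / (z + sin α) - x = (± cos α - x sin α) / (z + sin α)`, the quantity
`z · D(x, z)` is `1 / (2θ)` times integrals of `z / (z + sin α)` against fixed continuous
functions, and `z / (z + sin α) → 1` boundedly. The limiting integrals sum to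
`2 (sin a - x cos a) + 2 x cos θ` with `a = arctan x`, and `sin a = x cos a` because `tan a = x`.
-/

/-- The conditional expected one-step increment of the slope process in the
directional growth model. -/
noncomputable def growthDrift (θ x z : ℝ) : ℝ :=
  (1 / (2 * θ)) *
    ((∫ α in (-(Real.arctan x))..θ, ((x * z + Real.cos α) / (z + Real.sin α) - x)) +
     (∫ α in (Real.arctan x)..θ, ((x * z - Real.cos α) / (z + Real.sin α) - x)))

lemma add_sin_pos {z : ℝ} (hz : 1 < z) (α : ℝ) : 0 < z + sin α := by
  linarith [neg_one_le_sin α]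

lemma tendsto_integral_mul_div_add_sin {g : ℝ → ℝ} (hg : Continuous g) (a b : ℝ) :
    Tendsto (fun z => ∫ α in a..b, z * g α / (z + sin α)) atTop (𝓝 (∫ α in a..b, g α)) := by
  refine tendsto_integral_filter_of_dominated_convergence (fun α => 2 * |g α|) ?_ ?_
    ((continuous_const.mul hg.abs).intervalIntegrable a b) (.of_forall fun α _ => ?_)
  · filter_upwards [eventually_gt_atTop 1] with z hz
    exact ((continuous_const.mul hg).div (by fun_prop)
      fun α => (add_sin_pos hz α).ne').aestronglyMeasurable.restrict
  · filter_upwards [eventually_ge_atTop 2] with z hz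
    refine .of_forall fun α _ => ?_
    have hpos := add_sin_pos (by linarith : 1 < z) α
    -- `z ≤ 2 (z + sin α)` as soon as `z ≥ 2`
    rw [norm_eq_abs, abs_div, abs_mul, abs_of_pos (by linarith : 0 < z), abs_of_pos hpos,
      div_le_iff₀ hpos]
    nlinarith [abs_nonneg (g α), neg_one_le_sin α]
  · have hlim : Tendsto (fun z => g α - g α * sin α / (z + sin α)) atTop (𝓝 (g α - 0)) :=
      tendsto_const_nhds.sub <| tendsto_const_nhds.div_atTop <|
        tendsto_atTop_add_const_right _ _ tendsto_id
    rw [sub_zero] at hlim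
    refine hlim.congr' ?_
    filter_upwards [eventually_gt_atTop 1] with z hz
    have := (add_sin_pos hz α).ne'
    field_simp
    ring

lemma integral_mul_cos_sub_mul_sin (c x a b : ℝ) :
    ∫ α in a..b, (c * cos α - x * sin α) = c * (sin b - sin a) + x * (cos b - cos a) := by
  rw [integral_sub (continuous_cos.intervalIntegrable a b |>.const_mul c)
      (continuous_sin.intervalIntegrable a b |>.const_mul x), integral_const_mul, integral_const_mul,
    integral_cos, integral_sin]
  ring

lemma sin_arctan_eq_mul_cos_arctan (x : ℝ) : sin (arctan x) = x * cos (arctan x) := by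
  rw [sin_arctan, cos_arctan, mul_one_div]

lemma mul_growthDrift_eq {θ x z : ℝ} (hz : 1 < z) :
    z * growthDrift θ x z = (1 / (2 * θ)) *
      ((∫ α in -arctan x..θ, z * (1 * cos α - x * sin α) / (z + sin α)) +
        ∫ α in arctan x..θ, z * (-1 * cos α - x * sin α) / (z + sin α)) := by
  rw [growthDrift, mul_left_comm, mul_add, ← integral_const_mul, ← integral_const_mul]
  congr 2 <;> refine integral_congr fun α _ => ?_ <;>
  · have := (add_sin_pos hz α).ne'
    field_simp
    ring

lemma tendsto_mul_growthDrift (θ x : ℝ) :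
    Tendsto (fun z => z * growthDrift θ x z) atTop (𝓝 (x * cos θ / θ)) := by
  have hg (c : ℝ) : Continuous fun α => c * cos α - x * sin α := by fun_prop
  have hlim := ((tendsto_integral_mul_div_add_sin (hg 1) (-arctan x) θ).add
    (tendsto_integral_mul_div_add_sin (hg (-1)) (arctan x) θ)).const_mul (1 / (2 * θ))
  rw [integral_mul_cos_sub_mul_sin, integral_mul_cos_sub_mul_sin, sin_neg, cos_neg,
    sin_arctan_eq_mul_cos_arctan] at hlim
  convert hlim.congr' ((eventually_gt_atTop 1).mono fun z hz => (mul_growthDrift_eq hz).symm)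
    using 2
  ring

theorem stmt_1_general (θ x : ℝ) (hx : 0 < x) :
    Filter.Tendsto (fun z : ℝ => (z / x) * growthDrift θ x z) Filter.atTop
      (nhds (Real.cos θ / θ)) := by
  have h := (tendsto_mul_growthDrift θ x).div_const x
  rw [mul_div_assoc, mul_div_cancel_left₀ _ hx.ne'] at h
  exact h.congr fun z => by ring

theorem stmt_1 (θ x : ℝ) (hθ : θ ∈ Set.Ioo 0 (Real.pi / 2)) (hx : 0 < x) :
    Filter.Tendsto (fun z : ℝ => (z / x) * growthDrift θ x z) Filter.atTop
      (nhds (Real.cos θ / θ)) :=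
  stmt_1_general θ x hx
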